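/- If X is a geodesic metric space in which every geodesic triangle that is a simple closed curve is δ-thin, then every geodesic triangle in X is δ-thin (i.e., X is δ-hyperbolic). -/

import Mathlib

open Metric
open scoped ENNReal

noncomputable section

/-- A geodesic arc from `x` to `y` in a metric space `X`: the image of an isometric
embedding of the interval `[0, dist x y]` sending `0` to `x` and `dist x y` to `y`. -/
def IsGeodesicArc {X : Type} [MetricSpace X] (x y : X) (s : Set X) : Prop :=
  ∃ γ : ℝ → X, γ 0 = x ∧ γ (dist x y) = y ∧
    (∀ a ∈ Set.Icc (0 : ℝ) (dist x y), ∀ b ∈ Set.Icc (0 : ℝ) (dist x y),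
      dist (γ a) (γ b) = |a - b|) ∧
    s = γ '' Set.Icc (0 : ℝ) (dist x y)

/-- A geodesic triangle with vertices `x, y, z` and sides `s₁ = [xy]`, `s₂ = [yz]`,
`s₃ = [zx]`. -/
def IsGeodTriangle {X : Type} [MetricSpace X] (x y z : X) (s₁ s₂ s₃ : Set X) : Prop :=
  IsGeodesicArc x y s₁ ∧ IsGeodesicArc y z s₂ ∧ IsGeodesicArc z x s₃

/-- The sharp constant for thinness of the side `s` with respect to the set `t`
(the union of the other sides): the supremum over points of `s` of the distance to `t`. -/
def sideThin {X : Type} [MetricSpace X] (s t : Set X) : ℝ≥0∞ :=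
  ⨆ p ∈ s, ENNReal.ofReal (infDist p t)

/-- The sharp thin constant `δ(T)` of a triangle (or trilateral) with sides
`s₁ s₂ s₃`: a triangle is `δ`-thin iff `triThin s₁ s₂ s₃ ≤ δ`. -/
def triThin {X : Type} [MetricSpace X] (s₁ s₂ s₃ : Set X) : ℝ≥0∞ :=
  max (sideThin s₁ (s₂ ∪ s₃)) (max (sideThin s₂ (s₃ ∪ s₁)) (sideThin s₃ (s₁ ∪ s₂)))

/-- The hyperbolicity constant `δ(X)` of a metric space:
`δ(X) = sup { δ(T) : T is a geodesic triangle in X }` (with value in `[0,∞]`). -/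
def hypConst (X : Type) [MetricSpace X] : ℝ≥0∞ :=
  ⨆ (x : X) (y : X) (z : X) (s₁ : Set X) (s₂ : Set X) (s₃ : Set X)
    (_ : IsGeodTriangle x y z s₁ s₂ s₃), triThin s₁ s₂ s₃

/-- A simple closed curve in a metric space: an injective continuous image of a circle. -/
def IsSimpleClosedCurve {X : Type} [MetricSpace X] (s : Set X) : Prop :=
  ∃ f : AddCircle (1 : ℝ) → X, Continuous f ∧ Function.Injective f ∧ Set.range f = s

/-- A simple, connected, locally finite graph with edges of arbitrary (positive) lengths,
regarded as a geodesic metric space `X`: each edge `[u,v]` of length `ℓ s(u,v)` is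
identified with the real interval `[0, ℓ s(u,v)]` via the parametrization `param u v`,
and the distance is the shortest-path distance. -/
structure MetricGraph where
  /-- the vertices -/
  V : Type
  /-- the (simple) graph structure -/
  G : SimpleGraph V
  conn : G.Connected
  locFin : ∀ v : V, (G.neighborSet v).Finite
  /-- the length of each edge -/
  ℓ : Sym2 V → ℝ
  ℓ_pos : ∀ e ∈ G.edgeSet, 0 < ℓ e
  /-- the set of points of the graph, as a metric space -/
  X : Type
  [mX : MetricSpace X]
  /-- the inclusion of the vertices among the points -/
  ι : V → X
  ι_inj : Function.Injective ι
  /-- the arclength parametrization of each edge by `[0, ℓ s(u,v)]` -/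
  param : ∀ u v : V, G.Adj u v → ℝ → X
  param_zero : ∀ (u v : V) (h : G.Adj u v), param u v h 0 = ι u
  param_symm : ∀ (u v : V) (h : G.Adj u v) (t : ℝ),
    param v u h.symm t = param u v h (ℓ s(u, v) - t)
  param_injOn : ∀ (u v : V) (h : G.Adj u v),
    Set.InjOn (param u v h) (Set.Icc 0 (ℓ s(u, v)))
  /-- every point of the graph lies on some edge -/
  cover : ∀ x : X, ∃ (u v : V) (h : G.Adj u v),
    ∃ t ∈ Set.Icc (0 : ℝ) (ℓ s(u, v)), x = param u v h t
  /-- the distance between vertices is the shortest-path distance -/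
  dist_vertex : ∀ u v : V,
    dist (ι u) (ι v) = sInf { L : ℝ | ∃ w : G.Walk u v, L = (w.edges.map ℓ).sum }
  /-- the distance from an interior point of an edge to any other point is realized
  either within the edge or through one of the two endpoints of the edge -/
  dist_eq : ∀ (u v : V) (h : G.Adj u v), ∀ t ∈ Set.Icc (0 : ℝ) (ℓ s(u, v)), ∀ y : X,
    dist (param u v h t) y =
      sInf ({ t + dist (ι u) y, (ℓ s(u, v) - t) + dist (ι v) y } ∪
            { d : ℝ | ∃ r ∈ Set.Icc (0 : ℝ) (ℓ s(u, v)), y = param u v h r ∧ d = |t - r| })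
  /-- the space of points is a geodesic metric space -/
  geodesic : ∀ x y : X, ∃ s : Set X, IsGeodesicArc x y s

attribute [instance] MetricGraph.mX

namespace MetricGraph

variable (M : MetricGraph)

/-- The set of points of an edge of the graph. -/
def edgePoints {u v : M.V} (h : M.G.Adj u v) : Set M.X :=
  M.param u v h '' Set.Icc 0 (M.ℓ s(u, v))

/-- The midpoint `Pm(e)` of an edge. -/
def midpt {u v : M.V} (h : M.G.Adj u v) : M.X :=
  M.param u v h (M.ℓ s(u, v) / 2)

/-- `PMV(G)`: the set of points which are vertices or midpoints of edges. -/
def PMV : Set M.X :=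
  Set.range M.ι ∪ { x | ∃ (u v : M.V) (h : M.G.Adj u v), x = M.midpt h }

/-- `l_max = sup_{e ∈ E(G)} L(e)` (with value in `[0,∞]`). -/
def lmax : ℝ≥0∞ :=
  ⨆ e : M.G.edgeSet, ENNReal.ofReal (M.ℓ e.1)

/-- A cycle graph: a (finite) connected graph in which every vertex has degree 2.
(Connectedness is part of the `MetricGraph` structure.) -/
def IsCycleGraph : Prop :=
  Finite M.V ∧ ∀ v : M.V, (M.G.neighborSet v).ncard = 2

end MetricGraph

/-- The line graph `L(G)` of a metric graph `G`: its vertices correspond to the edges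
of `G`, two of them being adjacent when the corresponding edges of `G` share a vertex;
the edge `[V_{e_i}, V_{e_j}]` of `L(G)` has length `(L(e_i) + L(e_j))/2`. -/
structure LineGraphOf (M : MetricGraph) where
  /-- the line graph, as a metric graph -/
  L : MetricGraph
  /-- the vertices of `L(G)` correspond to the edges of `G` -/
  vEquiv : L.V ≃ M.G.edgeSet
  adj_iff : ∀ a b : L.V, L.G.Adj a b ↔
    (a ≠ b ∧ ∃ v : M.V, v ∈ (vEquiv a : Sym2 M.V) ∧ v ∈ (vEquiv b : Sym2 M.V))
  len_eq : ∀ a b : L.V, L.G.Adj a b →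
    L.ℓ s(a, b) = (M.ℓ (vEquiv a : Sym2 M.V) + M.ℓ (vEquiv b : Sym2 M.V)) / 2

/-- The set `PM_LV(L(G))`: points of `L(G)` which are vertices or points
`Pm_L([V_{e_i},V_{e_j}])`, i.e. the point of the edge `[V_{e_i},V_{e_j}]` at distance
`L(e_i)/2` from `V_{e_i}`. -/
def lineGraphPMLV (M : MetricGraph) (LG : LineGraphOf M) : Set LG.L.X :=
  Set.range LG.L.ι ∪
    { x | ∃ (a b : LG.L.V) (hab : LG.L.G.Adj a b),
        x = LG.L.param a b hab (M.ℓ (LG.vEquiv a : Sym2 M.V) / 2) }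

/-- The canonical map `h : L(G) → G`.  It sends the vertex `V_e` to the midpoint `Pm(e)`
of `e`, the point `Pm_L([V_{e_i},V_{e_j}])` to the common vertex `e_i ∩ e_j`, and maps
each half-edge of `L(G)` isometrically onto the corresponding half-edge of `G`:
if `e_a = s(u,w)` and `w` is the common vertex of `e_a` and `e_b`, then the point of the
edge `[V_{e_a},V_{e_b}]` at distance `t ∈ [0, L(e_a)/2]` from `V_{e_a}` is sent to the
point of `e_a` at distance `L(e_a)/2 + t` from `u`. -/
structure CanonicalMap (M : MetricGraph) (LG : LineGraphOf M) where
  /-- the underlying map on points -/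
  h : LG.L.X → M.X
  h_halfEdge : ∀ (a b : LG.L.V) (hab : LG.L.G.Adj a b) (u w : M.V) (huw : M.G.Adj u w),
    (LG.vEquiv a : Sym2 M.V) = s(u, w) → w ∈ (LG.vEquiv b : Sym2 M.V) →
    ∀ t ∈ Set.Icc (0 : ℝ) (M.ℓ (LG.vEquiv a : Sym2 M.V) / 2),
      h (LG.L.param a b hab t) =
        M.param u w huw (M.ℓ (LG.vEquiv a : Sym2 M.V) / 2 + t)

end

/-!
Let `p` lie on the side `[xy]` but not on `[yz] ∪ [zx]`, and let `A` be the largest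
subsegment of `[xy]` through `p` whose interior misses `[yz] ∪ [zx]`; its endpoints `q₁, q₂`
lie on `[yz] ∪ [zx]`. If both lie on one side, `A` and the piece of that side between them
form a bigon, i.e. a degenerate triangle with one side a point, whose boundary is a simple
closed curve. Otherwise, say `q₁ ∈ [yz]` and `q₂ ∈ [zx]`: follow `[yz]` from `q₁` towards `z`
up to its first point `w` on `[zx]`; then `A`, the piece of `[zx]` between `q₂` and `w`
and the piece of `[yz]` between `w` and `q₁` form a simple triangle (a bigon if `w = q₂`).
In all cases `p` lies on a side of a simple triangle whose other sides lie in
`[yz] ∪ [zx]`, so `p` is `δ`-close to `[yz] ∪ [zx]`. Simplicity of these curves comes from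
concatenating injective paths that meet only at their endpoints.
-/

open Set unitInterval

variable {X : Type} [MetricSpace X]

def IsometricOn (γ : ℝ → X) (S : Set ℝ) : Prop :=
  ∀ a ∈ S, ∀ b ∈ S, dist (γ a) (γ b) = |a - b|

namespace IsometricOn

variable {γ : ℝ → X} {S : Set ℝ}

theorem mono {J : Set ℝ} (hγ : IsometricOn γ S) (hJ : J ⊆ S) : IsometricOn γ J :=
  fun a ha b hb => hγ a (hJ ha) b (hJ hb)

theorem injOn (hγ : IsometricOn γ S) : InjOn γ S := by
  intro a ha b hb hab
  have h := hγ a ha b hb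
  rwa [hab, dist_self, eq_comm, abs_eq_zero, sub_eq_zero] at h

theorem continuousOn (hγ : IsometricOn γ S) : ContinuousOn γ S :=
  (LipschitzOnWith.of_dist_le_mul (K := 1) fun a ha b hb => by
    rw [hγ a ha b hb, NNReal.coe_one, one_mul, Real.dist_eq]).continuousOn

theorem isGeodesicArc_image_Icc {a b : ℝ} (hγ : IsometricOn γ (Icc a b)) (hab : a ≤ b) :
    IsGeodesicArc (γ a) (γ b) (γ '' Icc a b) := by
  have hd : dist (γ a) (γ b) = b - a := by
    rw [hγ a (left_mem_Icc.2 hab) b (right_mem_Icc.2 hab), abs_sub_comm,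
      abs_of_nonneg (sub_nonneg.2 hab)]
  have hmem : ∀ t ∈ Icc 0 (b - a), a + t ∈ Icc a b := fun t ht =>
    ⟨by linarith [ht.1], by linarith [ht.2]⟩
  refine ⟨fun t => γ (a + t), by simp, by simp [hd], fun s hs t ht => ?_, ?_⟩
  · rw [hd] at hs ht
    rw [hγ _ (hmem s hs) _ (hmem t ht), add_sub_add_left_eq_sub]
  · rw [hd, ← image_image (g := γ) (f := (a + ·)), image_const_add_Icc, add_zero,
      add_sub_cancel]

end IsometricOn

theorem isGeodesicArc_singleton (x : X) : IsGeodesicArc x x {x} := by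
  refine ⟨fun _ => x, rfl, rfl, fun a ha b hb => ?_, by simp⟩
  rw [dist_self, Icc_self, mem_singleton_iff] at ha hb
  simp [ha, hb]

section FirstHit

variable {Y : Type} [TopologicalSpace Y] {f : ℝ → Y} {a b : ℝ} {K : Set Y}

theorem ContinuousOn.exists_first_mem (hf : ContinuousOn f (Icc a b)) (hK : IsClosed K)
    (hab : a ≤ b) (hb : f b ∈ K) : ∃ c ∈ Icc a b, f c ∈ K ∧ ∀ t ∈ Ico a c, f t ∉ K := by
  have hS : IsCompact (Icc a b ∩ f ⁻¹' K) :=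
    isCompact_Icc.of_isClosed_subset (hf.preimage_isClosed_of_isClosed isClosed_Icc hK)
      inter_subset_left
  obtain ⟨c, ⟨hc, hcK⟩, hleast⟩ := hS.exists_isLeast ⟨b, right_mem_Icc.2 hab, hb⟩
  exact ⟨c, hc, hcK, fun t ht htK =>
    (hleast ⟨⟨ht.1, ht.2.le.trans hc.2⟩, htK⟩).not_gt ht.2⟩

theorem ContinuousOn.exists_last_mem (hf : ContinuousOn f (Icc a b)) (hK : IsClosed K)
    (hab : a ≤ b) (ha : f a ∈ K) : ∃ c ∈ Icc a b, f c ∈ K ∧ ∀ t ∈ Ioc c b, f t ∉ K := by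
  have hS : IsCompact (Icc a b ∩ f ⁻¹' K) :=
    isCompact_Icc.of_isClosed_subset (hf.preimage_isClosed_of_isClosed isClosed_Icc hK)
      inter_subset_left
  obtain ⟨c, ⟨hc, hcK⟩, hgreatest⟩ := hS.exists_isGreatest ⟨a, left_mem_Icc.2 hab, ha⟩
  exact ⟨c, hc, hcK, fun t ht htK =>
    (hgreatest ⟨⟨hc.1.trans ht.1.le, ht.2⟩, htK⟩).not_gt ht.1⟩

end FirstHit

namespace IsGeodesicArc

variable {x y p q : X} {s K : Set X}

theorem symm (h : IsGeodesicArc x y s) : IsGeodesicArc y x s := by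
  obtain ⟨γ, hx, hy, hγ, rfl⟩ := h
  unfold IsGeodesicArc
  rw [dist_comm y x]
  refine ⟨fun t => γ (dist x y - t), by simp [hy], by simp [hx], fun a ha b hb => ?_, ?_⟩
  · rw [hγ _ ⟨by linarith [ha.2], by linarith [ha.1]⟩ _ ⟨by linarith [hb.2], by linarith [hb.1]⟩,
      sub_sub_sub_cancel_left, abs_sub_comm]
  · rw [← image_image (g := γ) (f := (dist x y - ·)), image_const_sub_Icc, sub_zero, sub_self]

theorem left_mem (h : IsGeodesicArc x y s) : x ∈ s := by
  obtain ⟨γ, hx, -, -, rfl⟩ := h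
  exact ⟨0, left_mem_Icc.2 dist_nonneg, hx⟩

theorem right_mem (h : IsGeodesicArc x y s) : y ∈ s :=
  h.symm.left_mem

theorem isCompact (h : IsGeodesicArc x y s) : IsCompact s := by
  obtain ⟨γ, -, -, hγ, rfl⟩ := h
  exact isCompact_Icc.image_of_continuousOn (IsometricOn.continuousOn hγ)

theorem exists_subarc (h : IsGeodesicArc x y s) (hp : p ∈ s) (hq : q ∈ s) :
    ∃ B ⊆ s, IsGeodesicArc p q B := by
  obtain ⟨γ, -, -, hγ, rfl⟩ := h
  have hγ : IsometricOn γ (Icc 0 (dist x y)) := hγ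
  obtain ⟨a, ha, rfl⟩ := hp
  obtain ⟨b, hb, rfl⟩ := hq
  rcases le_total a b with hab | hba
  · exact ⟨_, image_mono (Icc_subset_Icc ha.1 hb.2),
      (hγ.mono (Icc_subset_Icc ha.1 hb.2)).isGeodesicArc_image_Icc hab⟩
  · exact ⟨_, image_mono (Icc_subset_Icc hb.1 ha.2),
      ((hγ.mono (Icc_subset_Icc hb.1 ha.2)).isGeodesicArc_image_Icc hba).symm⟩

theorem exists_first_mem (h : IsGeodesicArc x y s) (hK : IsClosed K) (hy : y ∈ K) :
    ∃ w ∈ K, ∃ B ⊆ s, IsGeodesicArc x w B ∧ B ∩ K ⊆ {w} := by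
  obtain ⟨γ, hx, hy', hγ, rfl⟩ := h
  have hγ : IsometricOn γ (Icc 0 (dist x y)) := hγ
  obtain ⟨c, hc, hcK, hfirst⟩ :=
    hγ.continuousOn.exists_first_mem hK dist_nonneg (hy'.symm ▸ hy)
  refine ⟨γ c, hcK, γ '' Icc 0 c, image_mono (Icc_subset_Icc_right hc.2), ?_, ?_⟩
  · simpa [hx] using (hγ.mono (Icc_subset_Icc_right hc.2)).isGeodesicArc_image_Icc hc.1
  · rintro _ ⟨⟨t, ht, rfl⟩, htK⟩
    obtain rfl : t = c := ht.2.eq_of_not_lt fun htc => hfirst t ⟨ht.1, htc⟩ htK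
    rfl

theorem exists_subarc_inter_subset_endpoints (h : IsGeodesicArc x y s) (hK : IsClosed K)
    (hx : x ∈ K) (hy : y ∈ K) (hp : p ∈ s) (hpK : p ∉ K) :
    ∃ q₁ q₂ A, IsGeodesicArc q₁ q₂ A ∧ q₁ ≠ q₂ ∧ p ∈ A ∧ q₁ ∈ K ∧ q₂ ∈ K ∧
      A ∩ K ⊆ {q₁, q₂} := by
  obtain ⟨γ, hx', hy', hγ, rfl⟩ := h
  have hγ : IsometricOn γ (Icc 0 (dist x y)) := hγ
  obtain ⟨t, ht, rfl⟩ := hp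
  obtain ⟨c, hc, hcK, hlast⟩ := (hγ.continuousOn.mono (Icc_subset_Icc_right ht.2)).exists_last_mem
    hK ht.1 (hx'.symm ▸ hx)
  obtain ⟨d, hd, hdK, hfirst⟩ := (hγ.continuousOn.mono (Icc_subset_Icc_left ht.1)).exists_first_mem
    hK ht.2 (hy'.symm ▸ hy)
  have hct : c < t := hc.2.lt_of_ne (by rintro rfl; exact hpK hcK)
  have htd : t < d := hd.1.lt_of_ne (by rintro rfl; exact hpK hdK)
  have hsub : Icc c d ⊆ Icc 0 (dist x y) := Icc_subset_Icc hc.1 hd.2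
  have hcd : c ≤ d := (hct.trans htd).le
  have hne : γ c ≠ γ d := fun h => (hct.trans htd).ne
    (hγ.injOn (hsub (left_mem_Icc.2 hcd)) (hsub (right_mem_Icc.2 hcd)) h)
  refine ⟨γ c, γ d, γ '' Icc c d, (hγ.mono hsub).isGeodesicArc_image_Icc hcd, hne,
    ⟨t, ⟨hct.le, htd.le⟩, rfl⟩, hcK, hdK, ?_⟩
  rintro _ ⟨⟨r, hr, rfl⟩, hrK⟩
  rcases hr.1.eq_or_lt with rfl | hcr
  · exact Or.inl rfl
  rcases hr.2.eq_or_lt with rfl | hrd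
  · exact Or.inr rfl
  rcases le_total r t with hrt | htr
  · exact absurd hrK (hlast r ⟨hcr, hrt⟩)
  · exact absurd hrK (hfirst r ⟨htr, hrd⟩)

end IsGeodesicArc

def IsArc (x y : X) (s : Set X) : Prop :=
  ∃ γ : Path x y, Function.Injective γ ∧ range γ = s

theorem IsGeodesicArc.isArc {x y : X} {s : Set X} (h : IsGeodesicArc x y s) (hxy : x ≠ y) :
    IsArc x y s := by
  obtain ⟨γ, hx, hy, hγ, rfl⟩ := h
  have hγ : IsometricOn γ (Icc 0 (dist x y)) := hγ
  have hD : 0 < dist x y := dist_pos.2 hxy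
  have hmem : ∀ t : I, dist x y * t ∈ Icc 0 (dist x y) := fun t =>
    ⟨mul_nonneg hD.le t.2.1, mul_le_of_le_one_right hD.le t.2.2⟩
  refine ⟨⟨⟨fun t => γ (dist x y * t), hγ.continuousOn.comp_continuous (by fun_prop) hmem⟩,
    by simp [hx], by simp [hy]⟩, fun s t hst => ?_, ?_⟩
  · exact Subtype.ext (mul_left_cancel₀ hD.ne' (hγ.injOn (hmem s) (hmem t) hst))
  · ext q
    constructor
    · rintro ⟨t, rfl⟩
      exact ⟨_, hmem t, rfl⟩
    · rintro ⟨r, hr, rfl⟩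
      refine ⟨⟨r / dist x y, div_nonneg hr.1 hD.le, (div_le_one hD).2 hr.2⟩, ?_⟩
      simp [mul_div_cancel₀ r hD.ne']

namespace Path

variable {x y z : X} {γ : Path x y} {γ' : Path y z}

theorem exists_of_trans_apply_eq (hγ : Function.Injective γ) (hγ' : Function.Injective γ')
    {s t : I} (hst : s < t) (h : γ.trans γ' s = γ.trans γ' t) :
    ∃ u : I, γ' u ∈ range γ ∧ u ≠ 0 ∧ (u = 1 → t = 1) := by
  rw [trans_apply, trans_apply] at h
  split_ifs at h with hs ht ht
  · exact absurd (Subtype.ext (by simpa using congrArg Subtype.val (hγ h))) hst.ne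
  · refine ⟨_, ⟨_, h⟩, fun h0 => ht ?_, fun h1 => Subtype.ext ?_⟩
    · have := congrArg Subtype.val h0
      simp only [Icc.coe_zero] at this
      linarith
    · have := congrArg Subtype.val h1
      simp only [Icc.coe_one] at this
      simp only [Icc.coe_one]
      linarith
  · exact absurd ((show (s : ℝ) ≤ t from hst.le).trans ht) hs
  · exact absurd (Subtype.ext (by simpa using congrArg Subtype.val (hγ' h))) hst.ne

theorem isSimpleClosedCurve_range (γ : Path x x)
    (hγ : ∀ ⦃s t : I⦄, s < t → γ s = γ t → t = 1) : IsSimpleClosedCurve (range γ) := by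
  have hlift : ∀ r ∈ Ico (0 : ℝ) 1, AddCircle.liftIco 1 0 γ.extend r = γ.extend r :=
    fun r hr => AddCircle.liftIco_zero_coe_apply hr
  refine ⟨AddCircle.liftIco 1 0 γ.extend,
    AddCircle.liftIco_zero_continuous (by simp) γ.continuous_extend.continuousOn, ?_, ?_⟩
  · intro a b hab
    obtain ⟨s, hs, rfl⟩ := AddCircle.eq_coe_Ico a
    obtain ⟨t, ht, rfl⟩ := AddCircle.eq_coe_Ico b
    rw [hlift s hs, hlift t ht, γ.extend_apply (Ico_subset_Icc_self hs),
      γ.extend_apply (Ico_subset_Icc_self ht)] at hab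
    rcases lt_trichotomy s t with hst | rfl | hts
    · exact absurd (congrArg Subtype.val (hγ (show (⟨s, _⟩ : I) < ⟨t, _⟩ from hst) hab)) ht.2.ne
    · rfl
    · exact absurd (congrArg Subtype.val (hγ (show (⟨t, _⟩ : I) < ⟨s, _⟩ from hts) hab.symm))
        hs.2.ne
  · ext q
    constructor
    · rintro ⟨a, rfl⟩
      obtain ⟨s, hs, rfl⟩ := AddCircle.eq_coe_Ico a
      rw [hlift s hs, γ.extend_apply (Ico_subset_Icc_self hs)]
      exact mem_range_self _
    · rintro ⟨t, rfl⟩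
      rcases eq_or_ne t 1 with rfl | ht
      · exact ⟨(0 : ℝ), by rw [hlift 0 (left_mem_Ico.2 one_pos), γ.extend_zero, γ.target]⟩
      · refine ⟨(t : ℝ), ?_⟩
        rw [hlift t ⟨t.2.1, t.2.2.lt_of_ne (fun h => ht (Subtype.ext h))⟩, γ.extend_extends']

end Path

namespace IsArc

variable {x y z : X} {A B : Set X}

theorem trans (hA : IsArc x y A) (hB : IsArc y z B) (hAB : A ∩ B ⊆ {y}) :
    IsArc x z (A ∪ B) := by
  obtain ⟨γ, hγ, rfl⟩ := hA
  obtain ⟨γ', hγ', rfl⟩ := hB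
  refine ⟨γ.trans γ', fun s t hst => ?_, Path.trans_range γ γ'⟩
  by_contra hne
  wlog hlt : s < t generalizing s t
  · exact this t s hst.symm (Ne.symm hne) (lt_of_le_of_ne (not_lt.1 hlt) (Ne.symm hne))
  obtain ⟨u, hu, hu0, -⟩ := Path.exists_of_trans_apply_eq hγ hγ' hlt hst
  exact hu0 (hγ' ((hAB ⟨hu, u, rfl⟩).trans γ'.source.symm))

theorem isSimpleClosedCurve_union (hA : IsArc x y A) (hB : IsArc y x B)
    (hAB : A ∩ B ⊆ {x, y}) : IsSimpleClosedCurve (A ∪ B) := by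
  obtain ⟨γ, hγ, rfl⟩ := hA
  obtain ⟨γ', hγ', rfl⟩ := hB
  rw [← Path.trans_range]
  refine (γ.trans γ').isSimpleClosedCurve_range fun s t hst h => ?_
  obtain ⟨u, hu, hu0, hu1⟩ := Path.exists_of_trans_apply_eq hγ hγ' hst h
  rcases hAB ⟨hu, u, rfl⟩ with hx | hy
  · exact hu1 (hγ' (hx.trans γ'.target.symm))
  · exact absurd (hγ' (hy.trans γ'.source.symm)) hu0

end IsArc

theorem ofReal_infDist_le_triThin {s₁ s₂ s₃ t : Set X} {p : X} (hp : p ∈ s₁)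
    (hs₂ : s₂.Nonempty) (ht : s₂ ∪ s₃ ⊆ t) :
    ENNReal.ofReal (infDist p t) ≤ triThin s₁ s₂ s₃ :=
  calc ENNReal.ofReal (infDist p t)
      ≤ ENNReal.ofReal (infDist p (s₂ ∪ s₃)) :=
        ENNReal.ofReal_le_ofReal (infDist_le_infDist_of_subset ht (hs₂.mono subset_union_left))
    _ ≤ sideThin s₁ (s₂ ∪ s₃) :=
        le_iSup₂ (f := fun q (_ : q ∈ s₁) => ENNReal.ofReal (infDist q (s₂ ∪ s₃))) p hp
    _ ≤ triThin s₁ s₂ s₃ := le_max_left _ _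

def SimpleTrianglesThin (X : Type) [MetricSpace X] (δ : ℝ≥0∞) : Prop :=
  ∀ (x y z : X) (s₁ s₂ s₃ : Set X), IsGeodTriangle x y z s₁ s₂ s₃ →
    IsSimpleClosedCurve (s₁ ∪ s₂ ∪ s₃) → triThin s₁ s₂ s₃ ≤ δ

namespace SimpleTrianglesThin

variable {δ : ℝ≥0∞} {p q₁ q₂ q₃ : X} {A B C t : Set X}

theorem ofReal_infDist_le_of_bigon (hyp : SimpleTrianglesThin X δ) (hA : IsGeodesicArc q₁ q₂ A)
    (hB : IsGeodesicArc q₁ q₂ B) (hne : q₁ ≠ q₂) (hAB : A ∩ B ⊆ {q₁, q₂}) (hp : p ∈ A)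
    (hBt : B ⊆ t) : ENNReal.ofReal (infDist p t) ≤ δ := by
  have hunion : A ∪ B ∪ {q₁} = A ∪ B :=
    union_eq_left.2 (singleton_subset_iff.2 (Or.inl hA.left_mem))
  have hcurve : IsSimpleClosedCurve (A ∪ B ∪ {q₁}) := by
    rw [hunion]
    exact (hA.isArc hne).isSimpleClosedCurve_union (hB.symm.isArc hne.symm) hAB
  refine (ofReal_infDist_le_triThin hp ⟨q₁, hB.left_mem⟩ ?_).trans
    (hyp q₁ q₂ q₁ A B {q₁} ⟨hA, hB.symm, isGeodesicArc_singleton q₁⟩ hcurve)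
  exact union_subset hBt (singleton_subset_iff.2 (hBt hB.left_mem))

theorem ofReal_infDist_le_of_triangle (hyp : SimpleTrianglesThin X δ)
    (hA : IsGeodesicArc q₁ q₂ A) (hB : IsGeodesicArc q₂ q₃ B) (hC : IsGeodesicArc q₃ q₁ C)
    (h₁₂ : q₁ ≠ q₂) (h₂₃ : q₂ ≠ q₃) (h₃₁ : q₃ ≠ q₁)
    (hAB : A ∩ B ⊆ {q₂}) (hBC : B ∩ C ⊆ {q₃}) (hCA : C ∩ A ⊆ {q₁}) (hp : p ∈ A)
    (hBCt : B ∪ C ⊆ t) : ENNReal.ofReal (infDist p t) ≤ δ := by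
  have hABC : (A ∪ B) ∩ C ⊆ {q₁, q₃} := by
    rintro r ⟨hr | hr, hrC⟩
    · exact Or.inl (hCA ⟨hrC, hr⟩)
    · exact Or.inr (hBC ⟨hr, hrC⟩)
  have hcurve : IsSimpleClosedCurve (A ∪ B ∪ C) :=
    ((hA.isArc h₁₂).trans (hB.isArc h₂₃) hAB).isSimpleClosedCurve_union (hC.isArc h₃₁) hABC
  exact (ofReal_infDist_le_triThin hp ⟨q₂, hB.left_mem⟩ hBCt).trans
    (hyp q₁ q₂ q₃ A B C ⟨hA, hB, hC⟩ hcurve)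

theorem ofReal_infDist_le_of_endpoints_mem (hyp : SimpleTrianglesThin X δ) {u v : X}
    {s : Set X} (hs : IsGeodesicArc u v s) (hA : IsGeodesicArc q₁ q₂ A) (hne : q₁ ≠ q₂)
    (hq₁ : q₁ ∈ s) (hq₂ : q₂ ∈ s) (hAs : A ∩ s ⊆ {q₁, q₂}) (hp : p ∈ A) (hst : s ⊆ t) :
    ENNReal.ofReal (infDist p t) ≤ δ := by
  obtain ⟨B, hBs, hB⟩ := hs.exists_subarc hq₁ hq₂
  exact hyp.ofReal_infDist_le_of_bigon hA hB hne (fun r hr => hAs ⟨hr.1, hBs hr.2⟩) hp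
    (hBs.trans hst)

theorem ofReal_infDist_union_le_of_mem_left_of_mem_right (hyp : SimpleTrianglesThin X δ) {x y z : X}
    {s s' : Set X} (hs : IsGeodesicArc y z s) (hs' : IsGeodesicArc z x s')
    (hA : IsGeodesicArc q₁ q₂ A) (hAss' : A ∩ (s ∪ s') ⊆ {q₁, q₂}) (hp : p ∈ A)
    (hq₁ : q₁ ∈ s) (hq₂ : q₂ ∈ s') (hq₁s' : q₁ ∉ s') (hq₂s : q₂ ∉ s) :
    ENNReal.ofReal (infDist p (s ∪ s')) ≤ δ := by
  obtain ⟨S, hSs, hS⟩ := hs.exists_subarc hq₁ hs.right_mem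
  obtain ⟨w, hws', B, hBS, hB, hBs'⟩ := hS.exists_first_mem hs'.isCompact.isClosed hs'.left_mem
  have hBs : B ⊆ s := hBS.trans hSs
  have hne : q₁ ≠ q₂ := fun h => hq₂s (h ▸ hq₁)
  have hAB : A ∩ B ⊆ {q₁} := by
    intro r hr
    rcases hAss' ⟨hr.1, Or.inl (hBs hr.2)⟩ with h | rfl
    · exact h
    · exact absurd (hBs hr.2) hq₂s
  by_cases hw : w = q₂
  · subst hw
    exact hyp.ofReal_infDist_le_of_bigon hA hB hne
      (hAB.trans (singleton_subset_iff.2 (mem_insert _ _))) hp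
      (hBs.trans subset_union_left)
  obtain ⟨C, hCs', hC⟩ := hs'.exists_subarc hq₂ hws'
  have hAC : A ∩ C ⊆ {q₂} := by
    intro r hr
    rcases hAss' ⟨hr.1, Or.inr (hCs' hr.2)⟩ with rfl | h
    · exact absurd (hCs' hr.2) hq₁s'
    · exact h
  refine hyp.ofReal_infDist_le_of_triangle hA hC hB.symm hne (Ne.symm hw)
    (fun h => hq₁s' (h ▸ hws')) hAC (fun r hr => hBs' ⟨hr.2, hCs' hr.1⟩)
    (fun r hr => hAB ⟨hr.2, hr.1⟩) hp
    (union_subset (hCs'.trans subset_union_right) (hBs.trans subset_union_left))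

theorem sideThin_le (hyp : SimpleTrianglesThin X δ) {x y z : X} {s₁ s₂ s₃ : Set X}
    (hT : IsGeodTriangle x y z s₁ s₂ s₃) : sideThin s₁ (s₂ ∪ s₃) ≤ δ := by
  obtain ⟨h₁, h₂, h₃⟩ := hT
  refine iSup₂_le fun p hp => ?_
  by_cases hpK : p ∈ s₂ ∪ s₃
  · simp [infDist_zero_of_mem hpK]
  obtain ⟨q₁, q₂, A, hA, hne, hpA, hq₁, hq₂, hAK⟩ :=
    h₁.exists_subarc_inter_subset_endpoints (h₂.isCompact.isClosed.union h₃.isCompact.isClosed)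
      (Or.inr h₃.right_mem) (Or.inl h₂.left_mem) hp hpK
  by_cases hs₂ : q₁ ∈ s₂ ∧ q₂ ∈ s₂
  · exact hyp.ofReal_infDist_le_of_endpoints_mem h₂ hA hne hs₂.1 hs₂.2
      (fun r hr => hAK ⟨hr.1, Or.inl hr.2⟩) hpA subset_union_left
  by_cases hs₃ : q₁ ∈ s₃ ∧ q₂ ∈ s₃
  · exact hyp.ofReal_infDist_le_of_endpoints_mem h₃ hA hne hs₃.1 hs₃.2
      (fun r hr => hAK ⟨hr.1, Or.inr hr.2⟩) hpA subset_union_right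
  rcases hq₁ with hq₁ | hq₁
  · have hq₂ : q₂ ∈ s₃ := hq₂.resolve_left fun h => hs₂ ⟨hq₁, h⟩
    exact hyp.ofReal_infDist_union_le_of_mem_left_of_mem_right h₂ h₃ hA hAK hpA hq₁ hq₂
      (fun h => hs₃ ⟨h, hq₂⟩) (fun h => hs₂ ⟨hq₁, h⟩)
  · have hq₂ : q₂ ∈ s₂ := hq₂.resolve_right fun h => hs₃ ⟨hq₁, h⟩
    exact hyp.ofReal_infDist_union_le_of_mem_left_of_mem_right h₂ h₃ hA.symm
      (pair_comm q₁ q₂ ▸ hAK) hpA hq₂ hq₁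
      (fun h => hs₃ ⟨hq₁, h⟩) (fun h => hs₂ ⟨h, hq₂⟩)

end SimpleTrianglesThin

theorem thin_of_cycle_triangles_thin_general (X : Type) [MetricSpace X] (δ : ℝ≥0∞)
    (hyp : ∀ (x y z : X) (s₁ s₂ s₃ : Set X), IsGeodTriangle x y z s₁ s₂ s₃ →
      IsSimpleClosedCurve (s₁ ∪ s₂ ∪ s₃) → triThin s₁ s₂ s₃ ≤ δ) :
    ∀ (x y z : X) (s₁ s₂ s₃ : Set X), IsGeodTriangle x y z s₁ s₂ s₃ →
      triThin s₁ s₂ s₃ ≤ δ := by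
  rintro x y z s₁ s₂ s₃ ⟨h₁, h₂, h₃⟩
  exact max_le (SimpleTrianglesThin.sideThin_le hyp ⟨h₁, h₂, h₃⟩)
    (max_le (SimpleTrianglesThin.sideThin_le hyp ⟨h₂, h₃, h₁⟩)
      (SimpleTrianglesThin.sideThin_le hyp ⟨h₃, h₁, h₂⟩))

/-- If `X` is a geodesic metric space in which every geodesic triangle
that is a simple closed curve is `δ`-thin, then every geodesic triangle in `X` is
`δ`-thin (i.e., `X` is `δ`-hyperbolic). -/
theorem thin_of_cycle_triangles_thin (X : Type) [MetricSpace X]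
    (hgeo : ∀ x y : X, ∃ s : Set X, IsGeodesicArc x y s) (δ : ℝ≥0∞)
    (hyp : ∀ (x y z : X) (s₁ s₂ s₃ : Set X), IsGeodTriangle x y z s₁ s₂ s₃ →
      IsSimpleClosedCurve (s₁ ∪ s₂ ∪ s₃) → triThin s₁ s₂ s₃ ≤ δ) :
    ∀ (x y z : X) (s₁ s₂ s₃ : Set X), IsGeodTriangle x y z s₁ s₂ s₃ →
      triThin s₁ s₂ s₃ ≤ δ :=
  thin_of_cycle_triangles_thin_general X δ hyp
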